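/- Let I be a countable index set and ℓ₁, ℓ₂ : I → ℝ positive functions such that the sets {i : N ≤ ℓ₁(i)+ℓ₂(i) < N+1} are finite for all N and ∑_{i ∈ I} D(L, ℓ₁(i), ℓ₂(i)) = L for some L > 0, where D(L,x,y) := 2·log((e^{L/2} + e^{(x+y)/2})/(e^{-L/2} + e^{(x+y)/2})). Then ∑_{i ∈ I} H(ℓ₁(i)+ℓ₂(i), L) > 1, where H(u,v) := 1/(1+e^{(u+v)/2}) + 1/(1+e^{(u-v)/2}), provided the latter sum converges. -/

import Mathlib

noncomputable def D (x y z : ℝ) : ℝ :=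
  2 * Real.log ((Real.exp (x/2) + Real.exp ((y+z)/2)) / (Real.exp (-x/2) + Real.exp ((y+z)/2)))

noncomputable def H (u v : ℝ) : ℝ :=
  1 / (1 + Real.exp ((u+v)/2)) + 1 / (1 + Real.exp ((u-v)/2))

/-!
Differentiating `D` in its first variable gives `∂ₛ D(s, x, y) = H(x + y, s)`, and
`H(u, s) = 1 - sinh(u/2) / (cosh(u/2) + cosh(s/2))` is strictly increasing in `s ≥ 0` when `u > 0`.
Since `D(0, x, y) = 0`, the mean value theorem gives `D(L, x, y) < L · H(x + y, L)` for every pair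
of pants; summing against the McShane identity `∑ D = L` yields `L < L · ∑ H`.
-/

open Real Set

lemma hasDerivAt_two_mul_log_exp_half_add_exp (c t : ℝ) :
    HasDerivAt (fun t => 2 * log (exp (t / 2) + exp c)) (1 / (1 + exp (c - t / 2))) t := by
  have hexp : HasDerivAt (fun t => exp (t / 2) + exp c) (exp (t / 2) * (1 / 2)) t :=
    (((hasDerivAt_id t).div_const 2).exp).add_const _
  refine ((hexp.log (by positivity)).const_mul 2).congr_deriv ?_
  rw [exp_sub]
  field_simp

lemma D_eq_sub (s x y : ℝ) :
    D s x y = 2 * log (exp (s / 2) + exp ((x + y) / 2))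
      - 2 * log (exp (-(s / 2)) + exp ((x + y) / 2)) := by
  rw [D, log_div (by positivity) (by positivity), neg_div]
  ring

lemma hasDerivAt_D (x y s : ℝ) : HasDerivAt (fun s => D s x y) (H (x + y) s) s := by
  have hplus := hasDerivAt_two_mul_log_exp_half_add_exp ((x + y) / 2) s
  have hminus := (hasDerivAt_two_mul_log_exp_half_add_exp ((x + y) / 2) (-s)).comp s
    (hasDerivAt_neg s)
  simp only [Function.comp_def, neg_div] at hminus
  rw [show (fun s => D s x y) = _ from funext fun s => D_eq_sub s x y]
  refine (hplus.sub hminus).congr_deriv ?_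
  rw [H]
  ring_nf

lemma D_zero (x y : ℝ) : D 0 x y = 0 := by
  simp [D_eq_sub]

lemma H_eq_one_sub (u s : ℝ) :
    H u s = 1 - sinh (u / 2) / (cosh (u / 2) + cosh (s / 2)) := by
  have hu : exp ((u + s) / 2) = exp (u / 2) * exp (s / 2) := by rw [← exp_add]; ring_nf
  have hv : exp ((u - s) / 2) = exp (u / 2) / exp (s / 2) := by rw [← exp_sub]; ring_nf
  rw [H, hu, hv, sinh_eq, cosh_eq, cosh_eq, exp_neg, exp_neg]
  have := exp_pos (u / 2)
  have := exp_pos (s / 2)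
  field_simp
  ring

lemma H_strictMonoOn {u : ℝ} (hu : 0 < u) : StrictMonoOn (H u) (Ici 0) := by
  intro s hs t ht hst
  have hcosh : cosh (s / 2) < cosh (t / 2) :=
    cosh_strictMonoOn (mem_Ici.mpr (div_nonneg hs zero_le_two))
      (mem_Ici.mpr (div_nonneg ht zero_le_two)) (by linarith)
  have := cosh_pos (u / 2)
  have := cosh_pos (s / 2)
  rw [H_eq_one_sub, H_eq_one_sub, sub_lt_sub_iff_left]
  gcongr

lemma D_lt_mul_H {x y L : ℝ} (hxy : 0 < x + y) (hL : 0 < L) : D L x y < L * H (x + y) L := by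
  obtain ⟨c, ⟨hc0, hcL⟩, hc⟩ := exists_hasDerivAt_eq_slope (fun s => D s x y) (H (x + y)) hL
    (fun s _ => (hasDerivAt_D x y s).continuousAt.continuousWithinAt)
    (fun s _ => hasDerivAt_D x y s)
  rw [D_zero, sub_zero, sub_zero, eq_div_iff hL.ne'] at hc
  rw [← hc, mul_comm]
  gcongr
  exact H_strictMonoOn hxy hc0.le hL.le hcL

theorem stmt14_general (I : Type*) (ℓ₁ ℓ₂ : I → ℝ)
    (hpos : ∀ i, 0 < ℓ₁ i ∧ 0 < ℓ₂ i)
    (L : ℝ) (hL : 0 < L)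
    (hid : ∑' i, D L (ℓ₁ i) (ℓ₂ i) = L)
    (hsum : Summable (fun i => H (ℓ₁ i + ℓ₂ i) L)) :
    1 < ∑' i, H (ℓ₁ i + ℓ₂ i) L := by
  obtain ⟨i₀⟩ : Nonempty I := by
    by_contra h
    rw [not_nonempty_iff] at h
    rw [tsum_empty] at hid
    exact hL.ne' hid.symm
  have hDsum : Summable (fun i => D L (ℓ₁ i) (ℓ₂ i)) := by
    by_contra h
    rw [tsum_eq_zero_of_not_summable h] at hid
    exact hL.ne' hid.symm
  have key : ∀ i, D L (ℓ₁ i) (ℓ₂ i) < L * H (ℓ₁ i + ℓ₂ i) L := fun i =>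
    D_lt_mul_H (add_pos (hpos i).1 (hpos i).2) hL
  have hlt := hDsum.tsum_lt_tsum (fun i => (key i).le) (key i₀) (hsum.mul_left L)
  rw [hid, tsum_mul_left] at hlt
  exact (lt_mul_iff_one_lt_right hL).mp hlt

theorem stmt14 (I : Type*) [Countable I] [Nonempty I] (ℓ₁ ℓ₂ : I → ℝ)
    (hpos : ∀ i, 0 < ℓ₁ i ∧ 0 < ℓ₂ i)
    (hfin : ∀ N : ℕ, {i : I | (N : ℝ) ≤ ℓ₁ i + ℓ₂ i ∧ ℓ₁ i + ℓ₂ i < N + 1}.Finite)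
    (L : ℝ) (hL : 0 < L)
    (hid : ∑' i, D L (ℓ₁ i) (ℓ₂ i) = L)
    (hsum : Summable (fun i => H (ℓ₁ i + ℓ₂ i) L)) :
    1 < ∑' i, H (ℓ₁ i + ℓ₂ i) L :=
  stmt14_general I ℓ₁ ℓ₂ hpos L hL hid hsum
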